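/- For every integer k ≥ 1: the list chromatic number of C_{2k+2} □ P_1 equals 2, and for every n ≥ 2 the list chromatic number of C_{2k+2} □ P_n equals 3. -/

import Mathlib

open SimpleGraph Finset

attribute [local instance] Classical.propDecidable

namespace ATPaper

/-- An orientation of a simple graph: each edge receives exactly one direction,
and arcs only exist along edges. -/
structure GraphOrientation {V : Type*} (G : SimpleGraph V) where
  arc : V → V → Prop
  arc_adj : ∀ u v, arc u v → G.Adj u v
  adj_arc : ∀ u v, G.Adj u v → (arc u v ↔ ¬ arc v u)

variable {V : Type*} [Fintype V]

/-- The set of arcs of an orientation. -/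
noncomputable def GraphOrientation.arcs {G : SimpleGraph V} (D : GraphOrientation G) :
    Finset (V × V) :=
  Finset.univ.filter fun p => D.arc p.1 p.2

/-- In-degree of a vertex in a finite set of arcs. -/
noncomputable def indeg (F : Finset (V × V)) (v : V) : ℕ :=
  (F.filter fun p => p.2 = v).card

/-- Out-degree of a vertex in a finite set of arcs. -/
noncomputable def outdeg (F : Finset (V × V)) (v : V) : ℕ :=
  (F.filter fun p => p.1 = v).card

/-- The circulations contained in an orientation `D`: spanning subdigraphs (sets of
arcs of `D`) in which every vertex has in-degree equal to out-degree. -/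
noncomputable def circulations {G : SimpleGraph V} (D : GraphOrientation G) :
    Finset (Finset (V × V)) :=
  D.arcs.powerset.filter fun F => ∀ v, indeg F v = outdeg F v

/-- `G` has an Alon–Tarsi orientation witnessing the bound `k`: an orientation with
maximum in-degree at most `k - 1` in which the numbers of even and odd circulations
differ. -/
noncomputable def HasATOrientation (G : SimpleGraph V) (k : ℕ) : Prop :=
  ∃ D : GraphOrientation G,
    (∀ v, indeg D.arcs v + 1 ≤ k) ∧
    ((circulations D).filter fun F => Even F.card).card ≠
      ((circulations D).filter fun F => Odd F.card).card

/-- The Alon–Tarsi number of `G`. -/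
noncomputable def alonTarsiNumber (G : SimpleGraph V) : ℕ :=
  sInf {k | HasATOrientation G k}

/-- `G` admits a proper coloring from the list assignment `L`. -/
def Choosable {W : Type*} (G : SimpleGraph W) (L : W → Finset ℕ) : Prop :=
  ∃ f : W → ℕ, (∀ v, f v ∈ L v) ∧ ∀ u v, G.Adj u v → f u ≠ f v

/-- `G` is `k`-choosable: colorable from every list assignment with lists of size at
least `k`. -/
def IsKChoosable {W : Type*} (G : SimpleGraph W) (k : ℕ) : Prop :=
  ∀ L : W → Finset ℕ, (∀ v, k ≤ (L v).card) → Choosable G L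

/-- The list chromatic number of `G`. -/
noncomputable def listChromaticNumber {W : Type*} (G : SimpleGraph W) : ℕ :=
  sInf {k | IsKChoosable G k}

/-- The `r`-th power of a graph: distinct vertices are adjacent iff their distance
is at most `r`. -/
def graphPower {W : Type*} (G : SimpleGraph W) (r : ℕ) : SimpleGraph W where
  Adj u v := u ≠ v ∧ G.Reachable u v ∧ G.dist u v ≤ r
  symm := ⟨by
    rintro u v ⟨h1, h2, h3⟩
    exact ⟨h1.symm, h2.symm, by rwa [SimpleGraph.dist_comm]⟩⟩
  loopless := ⟨by rintro v ⟨h1, -, -⟩; exact h1 rfl⟩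

/-- The join of two vertex-disjoint graphs. -/
def joinGraph {A B : Type*} (G : SimpleGraph A) (H : SimpleGraph B) :
    SimpleGraph (A ⊕ B) where
  Adj x y :=
    match x, y with
    | Sum.inl a, Sum.inl b => G.Adj a b
    | Sum.inr a, Sum.inr b => H.Adj a b
    | Sum.inl _, Sum.inr _ => True
    | Sum.inr _, Sum.inl _ => True
  symm := ⟨by
    rintro (a | a) (b | b) h
    · exact G.adj_symm h
    · trivial
    · trivial
    · exact H.adj_symm h⟩
  loopless := ⟨by
    rintro (a | a) h
    · exact G.ne_of_adj h rfl
    · exact H.ne_of_adj h rfl⟩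

/-!
The lower bounds come from subgraphs: any edge rules out 1-choosability, and once `k ≥ 1` and
`n ≥ 2` the graph contains the `3 × 2` grid `P₃ □ P₂`, which has a bad assignment of 2-lists.

For the upper bounds, even cycles are 2-choosable: if every list is contained in the next one
around the cycle, all lists are equal and a proper 2-colouring works; otherwise some colour of
`L i` is missing from `L (i + 1)`, and the greedy colouring backwards from `i` closes up.
Colouring `C □ Pₙ` row by row, each vertex loses at most the colour of the vertex below it, so
3-lists leave 2-lists on every row.
-/

open scoped Fin.NatCast Fin.CommRing

section Choosability

variable {W : Type*} {G : SimpleGraph W}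

theorem IsKChoosable.mono {k m : ℕ} (hkm : k ≤ m) (hG : IsKChoosable G k) :
    IsKChoosable G m :=
  fun L hL => hG L fun v => hkm.trans (hL v)

theorem listChromaticNumber_eq_of_isKChoosable {k : ℕ} (hG : IsKChoosable G (k + 1))
    (hG' : ¬ IsKChoosable G k) : listChromaticNumber G = k + 1 := by
  refine le_antisymm (Nat.sInf_le hG) (le_csInf ⟨_, hG⟩ fun m hm => ?_)
  by_contra! hlt
  exact hG' (hm.mono (Nat.le_of_lt_succ hlt))

theorem IsKChoosable.of_copy {W' : Type*} {G' : SimpleGraph W'} {k : ℕ} (f : Copy G' G)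
    (hG : IsKChoosable G k) : IsKChoosable G' k := by
  intro L' hL'
  let L : W → Finset ℕ := Function.extend f L' fun _ => range k
  have hLf (w : W') : L (f w) = L' w :=
    (show Function.Injective f from f.injective).extend_apply ..
  have hL : ∀ v, k ≤ (L v).card := by
    intro v
    by_cases hv : ∃ w, f w = v
    · obtain ⟨w, rfl⟩ := hv
      exact hLf w ▸ hL' w
    · simp [L, Function.extend_apply' _ _ _ hv]
  obtain ⟨c, hcL, hc⟩ := hG L hL
  exact ⟨c ∘ f, fun w => hLf w ▸ hcL (f w),
    fun u v huv => hc _ _ (f.toHom.map_adj huv)⟩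

theorem not_isKChoosable_one_of_adj {u v : W} (huv : G.Adj u v) : ¬ IsKChoosable G 1 := by
  intro hG
  obtain ⟨c, hcL, hc⟩ := hG (fun _ => {0}) fun _ => by simp
  exact hc u v huv (by simp_all)

theorem choosable_of_coloring_of_forall_eq {α : Type*} [Fintype α] (C : G.Coloring α)
    {L : W → Finset ℕ} {s : Finset ℕ} (hs : Fintype.card α ≤ s.card) (hL : ∀ v, L v = s) :
    Choosable G L := by
  obtain ⟨e⟩ : Nonempty (α ↪ s) := Function.Embedding.nonempty_of_card_le (by simpa using hs)
  exact ⟨fun v => e (C v), fun v => hL v ▸ (e (C v)).2,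
    fun u v huv h => C.valid huv (e.injective (Subtype.ext h))⟩

end Choosability

def pathGraphCastLE {m n : ℕ} (h : m ≤ n) : pathGraph m ↪g pathGraph n where
  toFun := Fin.castLE h
  inj' := Fin.castLE_injective h
  map_rel_iff' := by simp [pathGraph_adj]

def Copy.boxProd {α α' β β' : Type*} {G : SimpleGraph α} {G' : SimpleGraph α'}
    {H : SimpleGraph β} {H' : SimpleGraph β'} (f : Copy G G') (g : Copy H H') :
    Copy (G □ H) (G' □ H') where
  toHom :=
    { toFun := Prod.map f g
      map_rel' := fun {p q} hpq => by
        rcases boxProd_adj.mp hpq with ⟨h, h'⟩ | ⟨h, h'⟩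
        · exact boxProd_adj.mpr (Or.inl ⟨f.toHom.map_adj h, congrArg g h'⟩)
        · exact boxProd_adj.mpr (Or.inr ⟨g.toHom.map_adj h, congrArg f h'⟩) }
  injective' := f.injective.prodMap g.injective

theorem exists_seq_of_forall_exists_step {α : Type*} {p : α → Prop} {r : ℕ → α → α → Prop}
    (h₀ : ∃ a, p a) (hstep : ∀ t a, ∃ b, r t a b) :
    ∃ g : ℕ → α, p (g 0) ∧ ∀ t, r t (g t) (g (t + 1)) := by
  obtain ⟨a, ha⟩ := h₀
  choose next hnext using hstep
  exact ⟨fun t => Nat.rec (motive := fun _ => α) a next t, ha, fun t => hnext t _⟩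

theorem forall_eq_of_forall_le_add_one {α : Type*} [PartialOrder α] {n : ℕ}
    {f : Fin (n + 1) → α} (hf : ∀ j, f j ≤ f (j + 1)) (j : Fin (n + 1)) : f j = f 0 := by
  have hmono : Monotone fun t : ℕ => f t :=
    monotone_nat_of_le_succ fun t => by simpa [Nat.cast_succ] using hf t
  apply le_antisymm
  · simpa using hmono (show j.val ≤ n + 1 by omega)
  · simpa using hmono (Nat.zero_le j.val)

theorem choosable_cycleGraph_of_mem_of_not_mem {n : ℕ} {L : Fin (n + 2) → Finset ℕ}
    (hL : ∀ v, 2 ≤ (L v).card) {i : Fin (n + 2)} {c : ℕ} (hc : c ∈ L i) (hc' : c ∉ L (i + 1)) :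
    Choosable (cycleGraph (n + 2)) L := by
  -- colour `i, i - 1, i - 2, …` greedily, starting with `c`; the last vertex is `i + 1`, and its
  -- colour cannot clash with `c` because `c ∉ L (i + 1)`
  have hstep (t x : ℕ) : ∃ y, y ∈ L (i - (t + 1 : ℕ)) ∧ y ≠ x :=
    exists_mem_ne (hL _) x
  obtain ⟨h, hh₀, hh⟩ := exists_seq_of_forall_exists_step (p := (· = c)) ⟨c, rfl⟩ hstep
  have hmem : ∀ t : ℕ, h t ∈ L (i - t)
    | 0 => by simpa [hh₀] using hc
    | t + 1 => (hh t).1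
  have hsucc (u : Fin (n + 2)) : h (i - (u + 1)).val ≠ h (i - u).val := by
    set w := i - (u + 1) with hw
    have hwu : i - u = w + 1 := by rw [hw]; ring
    rw [hwu, Fin.val_add_one]
    split_ifs with hlast
    · have hiw : i - w = i + 1 := by
        rw [hlast, ← neg_eq_of_add_eq_zero_left (Fin.last_add_one _), sub_neg_eq_add]
      have := hmem w.val
      rw [Fin.cast_val_eq_self, hiw] at this
      rw [hh₀]
      exact fun heq => hc' (heq ▸ this)
    · exact ((hh _).2).symm
  refine ⟨fun v => h (i - v).val, fun v => by simpa using hmem (i - v).val, ?_⟩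
  intro u v huv
  rcases cycleGraph_adj.mp huv with huv | huv
  · rw [sub_eq_iff_eq_add'] at huv
    subst huv
    exact hsucc v
  · rw [sub_eq_iff_eq_add'] at huv
    subst huv
    exact (hsucc u).symm

theorem isKChoosable_two_cycleGraph (k : ℕ) : IsKChoosable (cycleGraph (2 * k + 2)) 2 := by
  intro L hL
  by_cases hsub : ∀ j, L j ⊆ L (j + 1)
  · exact choosable_of_coloring_of_forall_eq (cycleGraph.bicoloring_of_even _ ⟨k + 1, by ring⟩)
      (hL 0) (forall_eq_of_forall_le_add_one hsub)
  · obtain ⟨j, hj⟩ := not_forall.mp hsub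
    obtain ⟨c, hc, hc'⟩ := not_subset.mp hj
    exact choosable_cycleGraph_of_mem_of_not_mem hL hc hc'

theorem IsKChoosable.boxProd_pathGraph {V : Type*} {G : SimpleGraph V} {k n : ℕ}
    (hG : IsKChoosable G k) : IsKChoosable (G □ pathGraph n) (k + 1) := by
  intro L hL
  rcases Nat.eq_zero_or_pos n with rfl | hn
  · exact ⟨fun _ => 0, fun p => p.2.elim0, fun p => p.2.elim0⟩
  have : NeZero n := ⟨hn.ne'⟩
  -- colour the rows bottom-up, each vertex avoiding the colour just below it
  obtain ⟨g, hg₀, hg⟩ := exists_seq_of_forall_exists_step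
    (p := fun g : V → ℕ => (∀ v, g v ∈ L (v, 0)) ∧ ∀ u v, G.Adj u v → g u ≠ g v)
    (r := fun t prev g => (∀ v, g v ∈ (L (v, (t + 1 : ℕ))).erase (prev v)) ∧
      ∀ u v, G.Adj u v → g u ≠ g v)
    (hG _ fun v => (Nat.le_succ k).trans (hL (v, 0)))
    (fun t prev => hG _ fun v => by
      have := pred_card_le_card_erase (s := L (v, (t + 1 : ℕ))) (a := prev v)
      have := hL (v, (t + 1 : ℕ))
      omega)
  have hmem : ∀ (t : ℕ) v, g t v ∈ L (v, t)
    | 0 => by simpa using hg₀.1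
    | t + 1 => fun v => mem_of_mem_erase ((hg t).1 v)
  have hproper : ∀ t u v, G.Adj u v → g t u ≠ g t v
    | 0 => hg₀.2
    | t + 1 => (hg t).2
  refine ⟨fun p => g p.2.val p.1, fun p => by simpa using hmem p.2.val p.1, ?_⟩
  rintro ⟨u, x⟩ ⟨v, y⟩ huv
  rcases boxProd_adj.mp huv with ⟨huv, rfl⟩ | ⟨hxy, rfl⟩
  · exact hproper _ _ _ huv
  · rcases pathGraph_adj.mp hxy with hxy | hxy
    · change g x.val u ≠ g y.val u
      rw [← hxy]
      exact (ne_of_mem_erase ((hg _).1 u)).symm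
    · change g x.val u ≠ g y.val u
      rw [← hxy]
      exact ne_of_mem_erase ((hg _).1 u)

theorem IsKChoosable.boxProd_pathGraph_one {V : Type*} {G : SimpleGraph V} {k : ℕ}
    (hG : IsKChoosable G k) : IsKChoosable (G □ pathGraph 1) k :=
  hG.of_copy
    { toHom :=
        { toFun := Prod.fst
          map_rel' := fun {p q} hpq => by
            rcases boxProd_adj.mp hpq with ⟨h, -⟩ | ⟨h, -⟩
            · exact h
            · exact absurd h (Subsingleton.elim p.2 q.2 ▸ (pathGraph 1).irrefl) }
      injective' := fun p q h => Prod.ext h (Subsingleton.elim _ _) }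

theorem not_isKChoosable_two_pathGraph_three_boxProd_two :
    ¬ IsKChoosable (pathGraph 3 □ pathGraph 2) 2 := by
  intro h
  -- both ends of the middle rung have list `{1, 2}`; colouring them `1, 2` makes the left square
  -- uncolourable, colouring them `2, 1` the right one
  obtain ⟨f, hfL, hf⟩ :=
    h (fun p => ![![{1, 3}, {2, 3}], ![{1, 2}, {1, 2}], ![{2, 3}, {1, 3}]] p.1 p.2)
    (by rintro ⟨i, j⟩; fin_cases i <;> fin_cases j <;> simp)
  have h00 := hfL (0, 0)
  have h01 := hfL (0, 1)
  have h10 := hfL (1, 0)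
  have h11 := hfL (1, 1)
  have h20 := hfL (2, 0)
  have h21 := hfL (2, 1)
  have e₁ := hf (0, 0) (1, 0) (by simp [boxProd_adj, pathGraph_adj])
  have e₂ := hf (1, 0) (2, 0) (by simp [boxProd_adj, pathGraph_adj])
  have e₃ := hf (0, 1) (1, 1) (by simp [boxProd_adj, pathGraph_adj])
  have e₄ := hf (1, 1) (2, 1) (by simp [boxProd_adj, pathGraph_adj])
  have e₅ := hf (0, 0) (0, 1) (by simp [boxProd_adj, pathGraph_adj])
  have e₆ := hf (1, 0) (1, 1) (by simp [boxProd_adj, pathGraph_adj])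
  have e₇ := hf (2, 0) (2, 1) (by simp [boxProd_adj, pathGraph_adj])
  simp only [Fin.isValue, Matrix.cons_val_zero, Matrix.cons_val_one, Matrix.cons_val, mem_insert,
    mem_singleton] at h00 h01 h10 h11 h20 h21
  omega

theorem not_isKChoosable_two_cycleGraph_boxProd_pathGraph {m n : ℕ} (hm : 3 ≤ m) (hn : 2 ≤ n) :
    ¬ IsKChoosable (cycleGraph m □ pathGraph n) 2 := fun h =>
  not_isKChoosable_two_pathGraph_three_boxProd_two <| h.of_copy <|
    Copy.boxProd ((Copy.ofLE _ _ pathGraph_le_cycleGraph).comp (pathGraphCastLE hm).toCopy)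
      (pathGraphCastLE hn).toCopy

/-- For every integer `k ≥ 1`: the list chromatic number of `C_{2k+2} □ P_1` equals `2`,
and for every `n ≥ 2` the list chromatic number of `C_{2k+2} □ P_n` equals `3`. -/
theorem listChromaticNumber_evenCycle_boxProd_path (k : ℕ) (hk : 1 ≤ k) :
    listChromaticNumber (cycleGraph (2 * k + 2) □ pathGraph 1) = 2 ∧
    ∀ n : ℕ, 2 ≤ n → listChromaticNumber (cycleGraph (2 * k + 2) □ pathGraph n) = 3 := by
  have hC := isKChoosable_two_cycleGraph k
  have hadj : (cycleGraph (2 * k + 2) □ pathGraph 1).Adj (0, 0) (1, 0) :=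
    boxProd_adj_left.mpr (by simp [cycleGraph_adj])
  exact ⟨listChromaticNumber_eq_of_isKChoosable hC.boxProd_pathGraph_one
      (not_isKChoosable_one_of_adj hadj),
    fun n hn => listChromaticNumber_eq_of_isKChoosable hC.boxProd_pathGraph
      (not_isKChoosable_two_cycleGraph_boxProd_pathGraph (by omega) hn)⟩

end ATPaper
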